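/- Characterization of stationary points of the on-shell Hamiltonian: Assume L₀, each C a, and v are differentiable and the momentum identity and constraint identity hold at every point of ℝⁿ × ℝⁿ. Then the Fréchet derivative of the on-shell Hamiltonian H vanishes at (q,p) if and only if v(q,p) = 0 and, for every I, ∂₂ᴵL₀(v(q,p), q) + Σ_a F a (q,p) · ∂₂ᴵ(C a)(v(q,p), q) = 0. -/

import Mathlib

/-!
Fix a point `(q, p)`. Since every constraint vanishes identically along `(v, q)`, the
Hamiltonian can be written everywhere as `H = ⟨v, p⟩ - L(v, q)` with `L = L₀ + Σₐ Fₐ(q, p) Cₐ`,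
the multipliers frozen at `(q, p)`. The momentum identity says `p = ∂₁L(v, q)`, so in `dH` the
terms containing `dv` cancel (the envelope argument behind the Legendre transform), leaving
`dH(δq, δp) = ⟨v, δp⟩ - ⟨∂₂L(v, q), δq⟩`. This vanishes for all `(δq, δp)` exactly when
`v = 0` and `∂₂L(v, q) = 0`.
-/

open scoped BigOperators

/-- Partial derivative of `f` with respect to the `I`-th coordinate of its first argument. -/
noncomputable def pd1 {n : ℕ} (f : (Fin n → ℝ) × (Fin n → ℝ) → ℝ) (I : Fin n)
    (x : (Fin n → ℝ) × (Fin n → ℝ)) : ℝ :=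
  deriv (fun t => f (Function.update x.1 I t, x.2)) (x.1 I)

/-- Partial derivative of `f` with respect to the `I`-th coordinate of its second argument. -/
noncomputable def pd2 {n : ℕ} (f : (Fin n → ℝ) × (Fin n → ℝ) → ℝ) (I : Fin n)
    (x : (Fin n → ℝ) × (Fin n → ℝ)) : ℝ :=
  deriv (fun t => f (x.1, Function.update x.2 I t)) (x.2 I)

section PartialDerivatives

variable {n : ℕ} {f : (Fin n → ℝ) × (Fin n → ℝ) → ℝ} {x : (Fin n → ℝ) × (Fin n → ℝ)}

theorem pd1_eq_fderiv (hf : DifferentiableAt ℝ f x) (I : Fin n) :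
    pd1 f I x = fderiv ℝ f x (Pi.single I 1, 0) := by
  have hslice : HasDerivAt (fun t => (Function.update x.1 I t, x.2)) (Pi.single I 1, 0) (x.1 I) :=
    (hasDerivAt_update x.1 I _).prodMk (hasDerivAt_const _ _)
  exact (hf.hasFDerivAt.comp_hasDerivAt_of_eq _ hslice (by simp)).deriv

theorem pd2_eq_fderiv (hf : DifferentiableAt ℝ f x) (I : Fin n) :
    pd2 f I x = fderiv ℝ f x (0, Pi.single I 1) := by
  have hslice : HasDerivAt (fun t => (x.1, Function.update x.2 I t)) (0, Pi.single I 1) (x.2 I) :=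
    (hasDerivAt_const _ _).prodMk (hasDerivAt_update x.2 I _)
  exact (hf.hasFDerivAt.comp_hasDerivAt_of_eq _ hslice (by simp)).deriv

theorem fderiv_apply_eq_sum_pd (hf : DifferentiableAt ℝ f x) (w : (Fin n → ℝ) × (Fin n → ℝ)) :
    fderiv ℝ f x w = ∑ I, w.1 I * pd1 f I x + ∑ I, w.2 I * pd2 f I x := by
  have hw : w = ∑ I, w.1 I • ((Pi.single I 1 : Fin n → ℝ), (0 : Fin n → ℝ))
      + ∑ I, w.2 I • ((0 : Fin n → ℝ), (Pi.single I 1 : Fin n → ℝ)) := by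
    ext I <;> simp [Prod.fst_sum, Prod.snd_sum, Finset.sum_apply, Pi.single_apply]
  conv_lhs => rw [hw]
  simp only [map_add, map_sum, map_smul, smul_eq_mul, pd1_eq_fderiv hf, pd2_eq_fderiv hf]

end PartialDerivatives

section Multipliers

variable {n : ℕ} {ι : Type*} [Fintype ι]

def lagrangianWithMultipliers (L₀ : (Fin n → ℝ) × (Fin n → ℝ) → ℝ)
    (C : ι → (Fin n → ℝ) × (Fin n → ℝ) → ℝ) (μ : ι → ℝ) :
    (Fin n → ℝ) × (Fin n → ℝ) → ℝ :=
  fun y => L₀ y + ∑ a, μ a * C a y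

variable {L₀ : (Fin n → ℝ) × (Fin n → ℝ) → ℝ} {C : ι → (Fin n → ℝ) × (Fin n → ℝ) → ℝ}
  {x : (Fin n → ℝ) × (Fin n → ℝ)}

theorem hasFDerivAt_lagrangianWithMultipliers (hL : DifferentiableAt ℝ L₀ x)
    (hC : ∀ a, DifferentiableAt ℝ (C a) x) (μ : ι → ℝ) :
    HasFDerivAt (lagrangianWithMultipliers L₀ C μ)
      (fderiv ℝ L₀ x + ∑ a, μ a • fderiv ℝ (C a) x) x :=
  hL.hasFDerivAt.add (HasFDerivAt.fun_sum fun a _ => (hC a).hasFDerivAt.const_mul (μ a))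

theorem pd1_lagrangianWithMultipliers (hL : DifferentiableAt ℝ L₀ x)
    (hC : ∀ a, DifferentiableAt ℝ (C a) x) (μ : ι → ℝ) (I : Fin n) :
    pd1 (lagrangianWithMultipliers L₀ C μ) I x = pd1 L₀ I x + ∑ a, μ a * pd1 (C a) I x := by
  have h := hasFDerivAt_lagrangianWithMultipliers hL hC μ
  simp [pd1_eq_fderiv h.differentiableAt, h.fderiv, pd1_eq_fderiv hL, pd1_eq_fderiv (hC _)]

theorem pd2_lagrangianWithMultipliers (hL : DifferentiableAt ℝ L₀ x)
    (hC : ∀ a, DifferentiableAt ℝ (C a) x) (μ : ι → ℝ) (I : Fin n) :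
    pd2 (lagrangianWithMultipliers L₀ C μ) I x = pd2 L₀ I x + ∑ a, μ a * pd2 (C a) I x := by
  have h := hasFDerivAt_lagrangianWithMultipliers hL hC μ
  simp [pd2_eq_fderiv h.differentiableAt, h.fderiv, pd2_eq_fderiv hL, pd2_eq_fderiv (hC _)]

end Multipliers

section Hamiltonian

variable {n : ℕ}

theorem fderiv_legendre_apply {ℓ : (Fin n → ℝ) × (Fin n → ℝ) → ℝ}
    {v : (Fin n → ℝ) × (Fin n → ℝ) → (Fin n → ℝ)} {z : (Fin n → ℝ) × (Fin n → ℝ)}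
    (hℓ : DifferentiableAt ℝ ℓ (v z, z.1)) (hv : DifferentiableAt ℝ v z)
    (hmom : ∀ I, z.2 I = pd1 ℓ I (v z, z.1)) (w : (Fin n → ℝ) × (Fin n → ℝ)) :
    fderiv ℝ (fun z' => ∑ I, v z' I * z'.2 I - ℓ (v z', z'.1)) z w
      = ∑ I, v z I * w.2 I - ∑ I, w.1 I * pd2 ℓ I (v z, z.1) := by
  have hpairing : HasFDerivAt (fun z' => ∑ I, v z' I * z'.2 I)
      (∑ I, (v z I • (ContinuousLinearMap.proj I ∘L ContinuousLinearMap.snd ℝ _ _)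
        + z.2 I • (ContinuousLinearMap.proj I ∘L fderiv ℝ v z))) z :=
    HasFDerivAt.fun_sum fun I _ =>
      let πI : (Fin n → ℝ) →L[ℝ] ℝ := ContinuousLinearMap.proj I
      (πI.hasFDerivAt.comp z hv.hasFDerivAt).mul (πI.hasFDerivAt.comp z hasFDerivAt_snd)
  have hpotential : HasFDerivAt (fun z' => ℓ (v z', z'.1))
      (fderiv ℝ ℓ (v z, z.1) ∘L (fderiv ℝ v z).prod (ContinuousLinearMap.fst ℝ _ _)) z :=
    hℓ.hasFDerivAt.comp z (hv.hasFDerivAt.prodMk hasFDerivAt_fst)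
  rw [(hpairing.fun_sub hpotential).fderiv]
  simp only [sub_apply, sum_apply, add_apply, smul_apply, ContinuousLinearMap.comp_apply,
    ContinuousLinearMap.prod_apply, ContinuousLinearMap.coe_fst', ContinuousLinearMap.coe_snd',
    ContinuousLinearMap.proj_apply, smul_eq_mul, fderiv_apply_eq_sum_pd hℓ, ← hmom,
    Finset.sum_add_distrib, mul_comm (fderiv ℝ v z w _)]
  ring

theorem eq_zero_iff_of_apply_eq_sum_sub_sum
    {φ : ((Fin n → ℝ) × (Fin n → ℝ)) →L[ℝ] ℝ} {a b : Fin n → ℝ}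
    (hφ : ∀ w, φ w = ∑ I, a I * w.2 I - ∑ I, w.1 I * b I) : φ = 0 ↔ a = 0 ∧ b = 0 := by
  refine ⟨fun h => ⟨funext fun J => ?_, funext fun J => ?_⟩, fun ⟨ha, hb⟩ => ?_⟩
  · simpa [h, Pi.single_apply] using (hφ (0, Pi.single J 1)).symm
  · simpa [h, Pi.single_apply] using (hφ (Pi.single J 1, 0)).symm
  · exact ContinuousLinearMap.ext fun w => by simp [hφ, ha, hb]

end Hamiltonian

/-- Characterization of stationary points of the on-shell Hamiltonian. -/
theorem onshell_hamiltonian_stationary_iff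
    {n m : ℕ}
    (L₀ : (Fin n → ℝ) × (Fin n → ℝ) → ℝ)
    (C : Fin m → ((Fin n → ℝ) × (Fin n → ℝ) → ℝ))
    (v : (Fin n → ℝ) × (Fin n → ℝ) → (Fin n → ℝ))
    (F : (Fin n → ℝ) × (Fin n → ℝ) → (Fin m → ℝ))
    (hL : Differentiable ℝ L₀)
    (hC : ∀ a, Differentiable ℝ (C a))
    (hv : Differentiable ℝ v)
    (hmom : ∀ z : (Fin n → ℝ) × (Fin n → ℝ), ∀ I : Fin n,
      z.2 I = pd1 L₀ I (v z, z.1) + ∑ a, F z a * pd1 (C a) I (v z, z.1))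
    (hcon : ∀ z : (Fin n → ℝ) × (Fin n → ℝ), ∀ a, C a (v z, z.1) = 0)
    (H : (Fin n → ℝ) × (Fin n → ℝ) → ℝ)
    (hH : ∀ z : (Fin n → ℝ) × (Fin n → ℝ), H z = (∑ I, v z I * z.2 I) - L₀ (v z, z.1)) :
    ∀ z : (Fin n → ℝ) × (Fin n → ℝ),
      fderiv ℝ H z = 0 ↔
        (v z = 0 ∧ ∀ I : Fin n,
          pd2 L₀ I (v z, z.1) + ∑ a, F z a * pd2 (C a) I (v z, z.1) = 0) := by
  intro z
  set ℓ := lagrangianWithMultipliers L₀ C (F z)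
  have hHℓ : H = fun z' => ∑ I, v z' I * z'.2 I - ℓ (v z', z'.1) := by
    funext z'
    simp [hH, ℓ, lagrangianWithMultipliers, hcon]
  have hmomℓ : ∀ I, z.2 I = pd1 ℓ I (v z, z.1) := fun I => by
    rw [pd1_lagrangianWithMultipliers (hL _) (fun a => hC a _), hmom z I]
  have hℓ : DifferentiableAt ℝ ℓ (v z, z.1) :=
    (hasFDerivAt_lagrangianWithMultipliers (hL _) (fun a => hC a _) (F z)).differentiableAt
  rw [hHℓ, eq_zero_iff_of_apply_eq_sum_sub_sum (fderiv_legendre_apply hℓ (hv z) hmomℓ)]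
  simp only [ℓ, funext_iff, Pi.zero_apply, pd2_lagrangianWithMultipliers (hL _) (fun a => hC a _)]
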